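/- arXiv:1210.2912 — 4 statements merged into one kernel-verified Lean document; each statement's English description precedes it below -/
import Mathlib

section
/- If Fil and Fil' are filtrations on V satisfying Fil'^i ⊆ Fil^i for all i ∈ ℤ, then t_H(Fil') ≤ t_H(Fil), and equality t_H(Fil') = t_H(Fil) holds if and only if Fil'^i = Fil^i for all i ∈ ℤ. -/
/-! Summation by parts turns `t_H(Fil) = Σ i · (dim Fil^i - dim Fil^{i+1})` into
`a · dim V + Σ_{a < i ≤ b} dim Fil^i` for any window `[a, b]` outside of which the filtration is
`V` resp. `0`. On a common window `Fil'^i ⊆ Fil^i` compares the sums termwise, and equal sums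
force `dim Fil'^i = dim Fil^i`, hence `Fil'^i = Fil^i`, in every degree. -/

/-- The Hodge number `t_H(Fil) = Σ_{i ∈ ℤ} i · dim_F (Fil^i / Fil^{i+1})` of a decreasing
exhaustive separated filtration on a finite-dimensional vector space; for an antitone
filtration `dim (Fil^i / Fil^{i+1}) = dim Fil^i - dim Fil^{i+1}`, and the sum has finite
support. -/
noncomputable def hodgeNumber {F V : Type*} [Field F] [AddCommGroup V] [Module F V]
    (Fil : ℤ → Submodule F V) : ℤ :=
  ∑ᶠ i : ℤ, i * ((Module.finrank F (Fil i) : ℤ) - (Module.finrank F (Fil (i + 1)) : ℤ))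

open Finset Module

theorem sum_Ico_mul_sub_eq (f : ℤ → ℤ) {a b : ℤ} (hab : a ≤ b) :
    ∑ i ∈ Ico a b, i * (f i - f (i + 1)) = a * f a - b * f b + ∑ i ∈ Ioc a b, f i := by
  induction b, hab using Int.leInduction with
  | base => simp
  | succ b hab ih =>
    rw [← Order.succ_eq_add_one, ← insert_Ico_right_eq_Ico_succ hab, sum_insert (by simp),
      ← insert_Ioc_right_eq_Ioc_succ hab, sum_insert (by simp), ih, Order.succ_eq_add_one]
    ring

theorem finsum_mul_sub_eq (f : ℤ → ℤ) {a b : ℤ} (hab : a ≤ b) (hlow : ∀ i ≤ a, f i = f a)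
    (hhigh : ∀ i, b ≤ i → f i = 0) :
    ∑ᶠ i, i * (f i - f (i + 1)) = a * f a + ∑ i ∈ Ioc a b, f i := by
  have hsupp : (Function.support fun i ↦ i * (f i - f (i + 1))) ⊆ Ico a b := by
    intro i hi
    contrapose! hi
    rw [coe_Ico, Set.mem_Ico, not_and_or, not_le, not_lt] at hi
    rcases hi with hi | hi
    · simp [hlow i hi.le, hlow (i + 1) hi]
    · simp [hhigh i hi, hhigh (i + 1) (by omega)]
  rw [finsum_eq_finsetSum_of_support_subset _ hsupp, sum_Ico_mul_sub_eq f hab, hhigh b le_rfl]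
  ring

theorem hodgeNumber_eq_sum_Ioc {F V : Type*} [Field F] [AddCommGroup V] [Module F V]
    (Fil : ℤ → Submodule F V) {a b : ℤ} (hab : a ≤ b) (htop : ∀ i ≤ a, Fil i = ⊤)
    (hbot : ∀ i, b ≤ i → Fil i = ⊥) :
    hodgeNumber Fil = a * finrank F V + ∑ i ∈ Ioc a b, (finrank F (Fil i) : ℤ) := by
  rw [hodgeNumber, finsum_mul_sub_eq (fun i ↦ (finrank F (Fil i) : ℤ)) hab, htop a le_rfl,
    finrank_top]
  · intro i hi
    rw [htop i hi, htop a le_rfl]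
  · intro i hi
    rw [hbot i hi, finrank_bot, Nat.cast_zero]

theorem hodgeNumber_le_of_le_general
    {F V : Type*} [Field F] [AddCommGroup V] [Module F V] [FiniteDimensional F V]
    (Fil Fil' : ℤ → Submodule F V)
    (hFilExh : ∃ n : ℤ, ∀ i ≤ n, Fil i = ⊤) (hFilSep : ∃ n : ℤ, ∀ i, n ≤ i → Fil i = ⊥)
    (hFil'Exh : ∃ n : ℤ, ∀ i ≤ n, Fil' i = ⊤) (hFil'Sep : ∃ n : ℤ, ∀ i, n ≤ i → Fil' i = ⊥)
    (hle : ∀ i : ℤ, Fil' i ≤ Fil i) :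
    hodgeNumber Fil' ≤ hodgeNumber Fil ∧
      (hodgeNumber Fil' = hodgeNumber Fil ↔ ∀ i : ℤ, Fil' i = Fil i) := by
  obtain ⟨n, hn⟩ := hFilExh
  obtain ⟨m, hm⟩ := hFilSep
  obtain ⟨n', hn'⟩ := hFil'Exh
  obtain ⟨m', hm'⟩ := hFil'Sep
  set a := min n n'
  set b := max (max m m') a
  have hab : a ≤ b := le_max_right _ _
  have htop : ∀ i ≤ a, Fil i = ⊤ := fun i hi ↦ hn i (by omega)
  have htop' : ∀ i ≤ a, Fil' i = ⊤ := fun i hi ↦ hn' i (by omega)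
  have hbot : ∀ i, b ≤ i → Fil i = ⊥ := fun i hi ↦ hm i (by omega)
  have hbot' : ∀ i, b ≤ i → Fil' i = ⊥ := fun i hi ↦ hm' i (by omega)
  have hdim : ∀ i ∈ Ioc a b, (finrank F (Fil' i) : ℤ) ≤ finrank F (Fil i) :=
    fun i _ ↦ mod_cast Submodule.finrank_mono (hle i)
  rw [hodgeNumber_eq_sum_Ioc Fil hab htop hbot, hodgeNumber_eq_sum_Ioc Fil' hab htop' hbot',
    add_right_inj, sum_eq_sum_iff_of_le hdim]
  refine ⟨add_le_add_right (sum_le_sum hdim) _, fun heq i ↦ ?_, fun heq i _ ↦ by rw [heq i]⟩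
  rcases le_or_gt i a with hia | hai
  · rw [htop i hia, htop' i hia]
  rcases le_or_gt b i with hbi | hib
  · rw [hbot i hbi, hbot' i hbi]
  exact Submodule.eq_of_le_of_finrank_eq (hle i) (mod_cast heq i (mem_Ioc.2 ⟨hai, hib.le⟩))

/-- Let `V` be a finite-dimensional `F`-vector space and let `Fil`, `Fil'`
be two decreasing, exhaustive, separated filtrations on `V` with `Fil'^i ⊆ Fil^i` for all
`i ∈ ℤ`.  Then `t_H(Fil') ≤ t_H(Fil)`, with equality if and only if `Fil'^i = Fil^i` for
all `i ∈ ℤ`. -/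
theorem hodgeNumber_le_of_le
    {F V : Type*} [Field F] [AddCommGroup V] [Module F V] [FiniteDimensional F V]
    (Fil Fil' : ℤ → Submodule F V)
    (hFil : Antitone Fil) (hFil' : Antitone Fil')
    (hFilExh : ∃ n : ℤ, ∀ i ≤ n, Fil i = ⊤) (hFilSep : ∃ n : ℤ, ∀ i, n ≤ i → Fil i = ⊥)
    (hFil'Exh : ∃ n : ℤ, ∀ i ≤ n, Fil' i = ⊤) (hFil'Sep : ∃ n : ℤ, ∀ i, n ≤ i → Fil' i = ⊥)
    (hle : ∀ i : ℤ, Fil' i ≤ Fil i) :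
    hodgeNumber Fil' ≤ hodgeNumber Fil ∧
      (hodgeNumber Fil' = hodgeNumber Fil ↔ ∀ i : ℤ, Fil' i = Fil i) :=
  hodgeNumber_le_of_le_general Fil Fil' hFilExh hFilSep hFil'Exh hFil'Sep hle
end

section
/- If D is an admissible filtered (φ,N)-module over K₀ such that the filtered φ-module obtained by endowing (D, φ) with the filtration Filhat is also admissible, then Fil^i = Filhat^i for all i ∈ ℤ; equivalently, the filtration Fil of D satisfies Griffiths transversality N(Fil^i) ⊆ Fil^{i−1} for all i (D is naive). -/
/-- The Hodge number `t_H` of a subspace `D'` of `D`, for the filtration induced on `D'`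
by a filtration `Fil` of `D`:
`t_H = Σ_{i ∈ ℤ} i · dim (Fil^i ∩ D' / Fil^{i+1} ∩ D')`
(for an antitone filtration the dimension of this quotient is the difference of the
dimensions, and the sum has finite support when the filtration is exhaustive and
separated). -/
noncomputable def inducedHodgeNumber {K₀ D : Type*} [Field K₀] [AddCommGroup D]
    [Module K₀ D] (Fil : ℤ → Submodule K₀ D) (D' : Submodule K₀ D) : ℤ :=
  ∑ᶠ i : ℤ, i * ((Module.finrank K₀ ↥(Fil i ⊓ D') : ℤ) -
    (Module.finrank K₀ ↥(Fil (i + 1) ⊓ D') : ℤ))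

/-!
Taking `k = 0` in the definition of `Filhat` gives `Filhat^i ⊆ Fil^i`, and both filtrations are
admissible for the same `φ`, so `t_H(Fil) = t_N(D) = t_H(Filhat)`. By Abel summation
`t_H(Fil) - t_H(Filhat) = Σ_i (dim Fil^i - dim Filhat^i)`, a finite sum of nonnegative terms,
so every term vanishes and `Fil = Filhat`. Griffiths transversality is the `k = 1` part of the
definition of `Filhat`.
-/

open Function Module

theorem finsum_intCast_mul_sub_add_one {R : Type*} [CommRing R] {f : ℤ → R}
    (hf : f.HasFiniteSupport) :
    ∑ᶠ i : ℤ, (i : R) * (f i - f (i + 1)) = ∑ᶠ i : ℤ, f i := by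
  have hshift : (fun i : ℤ => f (i + 1)).HasFiniteSupport :=
    hf.fun_comp_of_injective (add_left_injective 1)
  have hreindex : ∑ᶠ i : ℤ, (i : R) * f (i + 1) = ∑ᶠ i : ℤ, ((i : R) - 1) * f i :=
    calc ∑ᶠ i : ℤ, (i : R) * f (i + 1) = ∑ᶠ i : ℤ, (((i + 1 : ℤ) : R) - 1) * f (i + 1) := by
          simp
      _ = _ := finsum_comp_equiv (Equiv.addRight (1 : ℤ)) (f := fun j : ℤ => ((j : R) - 1) * f j)
  calc ∑ᶠ i : ℤ, (i : R) * (f i - f (i + 1))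
      = ∑ᶠ i : ℤ, (i : R) * f i - ∑ᶠ i : ℤ, (i : R) * f (i + 1) := by
        simp_rw [mul_sub]
        exact finsum_sub_distrib (hf.mul_right _) (hshift.mul_right _)
    _ = ∑ᶠ i : ℤ, ((i : R) * f i - ((i : R) - 1) * f i) := by
        rw [hreindex]
        exact (finsum_sub_distrib (hf.mul_right _) (hf.mul_right _)).symm
    _ = ∑ᶠ i : ℤ, f i := by simp_rw [← sub_mul, sub_sub_cancel, one_mul]

section Semiring

variable {R M : Type*} [Semiring R] [AddCommMonoid M] [Module R M]

def IsBoundedFiltration (F : ℤ → Submodule R M) (a c : ℤ) : Prop :=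
  (∀ i ≤ a, F i = ⊤) ∧ ∀ i, c ≤ i → F i = ⊥

variable (N : M →ₗ[R] M) (F : ℤ → Submodule R M)

def filHat (i : ℤ) : Submodule R M :=
  ⨅ k : ℕ, (F (i - k)).comap (N ^ k)

theorem filHat_le (i : ℤ) : filHat N F i ≤ F i := by
  simpa [filHat, Module.End.one_eq_id, Submodule.comap_id] using
    iInf_le (fun k : ℕ => (F (i - k)).comap (N ^ k)) 0

theorem map_filHat_le (i : ℤ) : (filHat N F i).map N ≤ F (i - 1) := by
  rw [Submodule.map_le_iff_le_comap]
  simpa [filHat] using iInf_le (fun k : ℕ => (F (i - k)).comap (N ^ k)) 1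

theorem IsBoundedFiltration.filHat {F : ℤ → Submodule R M} {a c : ℤ}
    (hF : IsBoundedFiltration F a c) : IsBoundedFiltration (filHat N F) a c := by
  refine ⟨fun i hi => eq_top_iff.2 (le_iInf fun k => ?_),
    fun i hi => eq_bot_iff.2 ((filHat_le N F i).trans (hF.2 i hi).le)⟩
  rw [hF.1 (i - k) (by omega), Submodule.comap_top]

end Semiring

section Field

variable {K V : Type*} [Field K] [AddCommGroup V] [Module K V]

theorem inducedHodgeNumber_top (F : ℤ → Submodule K V) :
    inducedHodgeNumber F ⊤ =
      ∑ᶠ i : ℤ, i * ((finrank K (F i) : ℤ) - finrank K (F (i + 1))) :=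
  finsum_congr fun i => by rw [inf_top_eq, inf_top_eq]

namespace IsBoundedFiltration

variable {F G : ℤ → Submodule K V} {a c : ℤ}

theorem hasFiniteSupport_hodgeSummand (hF : IsBoundedFiltration F a c) :
    (fun i : ℤ => i * ((finrank K (F i) : ℤ) - finrank K (F (i + 1)))).HasFiniteSupport := by
  refine (Set.finite_Ico a c).subset (support_subset_iff'.2 fun i hi => ?_)
  rcases not_and_or.1 (Set.mem_Ico.not.1 hi) with hi | hi
  · rw [hF.1 i (by omega), hF.1 (i + 1) (by omega), sub_self, mul_zero]
  · rw [hF.2 i (by omega), hF.2 (i + 1) (by omega), sub_self, mul_zero]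

theorem hasFiniteSupport_finrank_sub (hF : IsBoundedFiltration F a c)
    (hG : IsBoundedFiltration G a c) :
    (fun i : ℤ => (finrank K (F i) : ℤ) - finrank K (G i)).HasFiniteSupport := by
  refine (Set.finite_Ioo a c).subset (support_subset_iff'.2 fun i hi => ?_)
  rcases not_and_or.1 (Set.mem_Ioo.not.1 hi) with hi | hi
  · rw [hF.1 i (by omega), hG.1 i (by omega), sub_self]
  · rw [hF.2 i (by omega), hG.2 i (by omega), sub_self]

theorem inducedHodgeNumber_top_sub (hF : IsBoundedFiltration F a c)
    (hG : IsBoundedFiltration G a c) :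
    inducedHodgeNumber F ⊤ - inducedHodgeNumber G ⊤ =
      ∑ᶠ i : ℤ, ((finrank K (F i) : ℤ) - finrank K (G i)) := by
  rw [inducedHodgeNumber_top, inducedHodgeNumber_top,
    ← finsum_sub_distrib hF.hasFiniteSupport_hodgeSummand hG.hasFiniteSupport_hodgeSummand,
    ← finsum_intCast_mul_sub_add_one (hF.hasFiniteSupport_finrank_sub hG)]
  exact finsum_congr fun i => by push_cast; ring

theorem eq_of_le_of_inducedHodgeNumber_eq [FiniteDimensional K V]
    (hF : IsBoundedFiltration F a c) (hG : IsBoundedFiltration G a c) (hle : ∀ i, G i ≤ F i)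
    (h : inducedHodgeNumber F ⊤ = inducedHodgeNumber G ⊤) : F = G := by
  have hnonneg : ∀ i, 0 ≤ (finrank K (F i) : ℤ) - finrank K (G i) := fun i =>
    sub_nonneg.2 (by exact_mod_cast Submodule.finrank_mono (hle i))
  have hsum : ∑ᶠ i : ℤ, ((finrank K (F i) : ℤ) - finrank K (G i)) = 0 := by
    rw [← hF.inducedHodgeNumber_top_sub hG, h, sub_self]
  funext i
  refine (Submodule.eq_of_le_of_finrank_eq (hle i) ?_).symm
  by_contra hne
  have hpos := finsum_pos hnonneg ⟨i, (hnonneg i).lt_of_ne (by omega)⟩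
    (hF.hasFiniteSupport_finrank_sub hG)
  omega

end IsBoundedFiltration

end Field

theorem naive_of_admissible_of_filhat_admissible_general
    {K₀ : Type*} [Field K₀]
    (σ : K₀ ≃+* K₀) (v : K₀ → ℤ)
    {D : Type*} [AddCommGroup D] [Module K₀ D] [FiniteDimensional K₀ D]
    (φ : D →ₛₗ[(σ : K₀ →+* K₀)] D)
    (N : D →ₗ[K₀] D)
    (Fil : ℤ → Submodule K₀ D)
    (hFilExh : ∃ n : ℤ, ∀ i ≤ n, Fil i = ⊤) (hFilSep : ∃ n : ℤ, ∀ i, n ≤ i → Fil i = ⊥)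
    -- admissibility of `(D, φ, N, Fil)` as a filtered (φ,N)-module:
    (hadm_eq : ∀ {n : ℕ} (b : Module.Basis (Fin n) K₀ D) (A : Matrix (Fin n) (Fin n) K₀),
      (∀ j, φ (b j) = ∑ i, A i j • b i) → inducedHodgeNumber Fil ⊤ = v A.det)
    -- the filtration `Filhat`:
    (Filhat : ℤ → Submodule K₀ D)
    (hFilhat : ∀ i : ℤ, Filhat i = ⨅ k : ℕ, (Fil (i - k)).comap (N ^ k))
    -- admissibility of `(D, φ, Filhat)` as a filtered φ-module:
    (hadm_eq' : ∀ {n : ℕ} (b : Module.Basis (Fin n) K₀ D) (A : Matrix (Fin n) (Fin n) K₀),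
      (∀ j, φ (b j) = ∑ i, A i j • b i) → inducedHodgeNumber Filhat ⊤ = v A.det) :
    (∀ i : ℤ, Fil i = Filhat i) ∧ ∀ i : ℤ, (Fil i).map N ≤ Fil (i - 1) := by
  obtain ⟨a, hExh⟩ := hFilExh
  obtain ⟨c, hSep⟩ := hFilSep
  have hbdd : IsBoundedFiltration Fil a c := ⟨hExh, hSep⟩
  obtain rfl : Filhat = filHat N Fil := funext hFilhat
  let b := Module.finBasis K₀ D
  have hφb : ∀ j, φ (b j) = ∑ i, b.repr (φ (b j)) i • b i := fun j => (b.sum_repr _).symm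
  have hHodge : inducedHodgeNumber Fil ⊤ = inducedHodgeNumber (filHat N Fil) ⊤ := by
    rw [hadm_eq b _ hφb, hadm_eq' b _ hφb]
  have hnaive : Fil = filHat N Fil :=
    hbdd.eq_of_le_of_inducedHodgeNumber_eq (hbdd.filHat N) (filHat_le N Fil) hHodge
  refine ⟨congrFun hnaive, fun i => ?_⟩
  rw [congrFun hnaive i]
  exact map_filHat_le N Fil i

/-- Let `K₀` be the fraction field of the Witt vectors of a perfect field
of characteristic `p` (abstracted here as a field of characteristic zero equipped with an
automorphism `σ` and a `p`-adic valuation `v` on nonzero elements satisfying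
`v ∘ σ = v` and `v p = 1`).  Let `D` be a filtered `(φ, N)`-module over `K₀`: a
finite-dimensional `K₀`-vector space with an injective `σ`-semilinear `φ`, a nilpotent
`K₀`-linear `N` with `N ∘ φ = p · (φ ∘ N)`, and a decreasing exhaustive separated
filtration `Fil`.  `t_N` of a `φ`-stable subspace is `v (det A)` for `A` the matrix of
`φ` in any basis; admissibility of a filtration means `t_H(D) = t_N(D)` together with
`t_H(D') ≤ t_N(D')` for every sub-object `D'`.  If `D` (with `Fil`) is admissible as a
filtered `(φ, N)`-module, and `D` endowed with the filtration
`Filhat^i = ⋂_{k ∈ ℕ} (N^k)⁻¹(Fil^{i-k})` is admissible as a filtered `φ`-module, then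
`Fil^i = Filhat^i` for all `i ∈ ℤ`; equivalently, `Fil` satisfies Griffiths
transversality `N(Fil^i) ⊆ Fil^{i-1}` for all `i` (i.e. `D` is naive). -/
theorem naive_of_admissible_of_filhat_admissible
    (p : ℕ) (hp : p.Prime)
    {K₀ : Type*} [Field K₀] [CharZero K₀]
    (σ : K₀ ≃+* K₀) (v : K₀ → ℤ)
    (hv_mul : ∀ x y : K₀, x ≠ 0 → y ≠ 0 → v (x * y) = v x + v y)
    (hvσ : ∀ x : K₀, v (σ x) = v x)
    (hvp : v (p : K₀) = 1)
    {D : Type*} [AddCommGroup D] [Module K₀ D] [FiniteDimensional K₀ D]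
    (φ : D →ₛₗ[(σ : K₀ →+* K₀)] D) (hφ : Function.Injective φ)
    (N : D →ₗ[K₀] D) (hN : IsNilpotent N)
    (hNφ : ∀ x : D, N (φ x) = (p : K₀) • φ (N x))
    (Fil : ℤ → Submodule K₀ D) (hFil : Antitone Fil)
    (hFilExh : ∃ n : ℤ, ∀ i ≤ n, Fil i = ⊤) (hFilSep : ∃ n : ℤ, ∀ i, n ≤ i → Fil i = ⊥)
    -- admissibility of `(D, φ, N, Fil)` as a filtered (φ,N)-module:
    (hadm_eq : ∀ {n : ℕ} (b : Module.Basis (Fin n) K₀ D) (A : Matrix (Fin n) (Fin n) K₀),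
      (∀ j, φ (b j) = ∑ i, A i j • b i) → inducedHodgeNumber Fil ⊤ = v A.det)
    (hadm_le : ∀ D' : Submodule K₀ D, (∀ x ∈ D', φ x ∈ D') → (∀ x ∈ D', N x ∈ D') →
      ∀ {n : ℕ} (b : Module.Basis (Fin n) K₀ ↥D') (A : Matrix (Fin n) (Fin n) K₀),
      (∀ j, φ (b j : D) = ∑ i, A i j • (b i : D)) → inducedHodgeNumber Fil D' ≤ v A.det)
    -- the filtration `Filhat`:
    (Filhat : ℤ → Submodule K₀ D)
    (hFilhat : ∀ i : ℤ, Filhat i = ⨅ k : ℕ, (Fil (i - k)).comap (N ^ k))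
    -- admissibility of `(D, φ, Filhat)` as a filtered φ-module:
    (hadm_eq' : ∀ {n : ℕ} (b : Module.Basis (Fin n) K₀ D) (A : Matrix (Fin n) (Fin n) K₀),
      (∀ j, φ (b j) = ∑ i, A i j • b i) → inducedHodgeNumber Filhat ⊤ = v A.det)
    (hadm_le' : ∀ D' : Submodule K₀ D, (∀ x ∈ D', φ x ∈ D') →
      ∀ {n : ℕ} (b : Module.Basis (Fin n) K₀ ↥D') (A : Matrix (Fin n) (Fin n) K₀),
      (∀ j, φ (b j : D) = ∑ i, A i j • (b i : D)) →
        inducedHodgeNumber Filhat D' ≤ v A.det) :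
    (∀ i : ℤ, Fil i = Filhat i) ∧ ∀ i : ℤ, (Fil i).map N ≤ Fil (i - 1) :=
  naive_of_admissible_of_filhat_admissible_general σ v φ N Fil hFilExh hFilSep hadm_eq Filhat
    hFilhat hadm_eq'
end

section
/- The evaluation map f : M[e]^{τ̃=1} → M, f(P) = P(0), is injective and its image is exactly M^log; moreover its inverse g : M^log → M[e]^{τ̃=1} is given by g(x) = Σ_{n≥0} (e^n/n!)·(−log τ)^n(x), a finite sum for each x ∈ M^log. -/
/-- For a linear automorphism `τ` of `M`, `(log τ) x = Σ_{k ≥ 1} (−1)^{k−1}/k • (τ−1)^k x`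
(a finite sum — hence a well-defined `finsum` — whenever `(τ−1)^n x = 0` for some `n`,
i.e. on the locally unipotent part `M^log`). -/
noncomputable def logOf {F M : Type*} [Field F] [CharZero F] [AddCommGroup M] [Module F M]
    (τ : M ≃ₗ[F] M) : M → M := fun x =>
  ∑ᶠ k : ℕ, ((-1 : F) ^ k / (k + 1 : F)) • ((τ.toLinearMap - 1) ^ (k + 1)) x

/-- The operator `τ̃` on `M[e]`, sending `Σ_k a_k e^k` to `Σ_k τ(a_k) (e+1)^k`: apply `τ`
to the coefficients and substitute `e ↦ e + 1`. -/
noncomputable def tauTilde {F M : Type*} [Field F] [CharZero F] [AddCommGroup M] [Module F M]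
    (τ : M ≃ₗ[F] M) : PolynomialModule F M →ₗ[F] PolynomialModule F M :=
  (PolynomialModule.comp (Polynomial.X + 1)).comp (PolynomialModule.map F τ.toLinearMap)

/-- The candidate inverse `g(x) = Σ_{n ≥ 0} (e^n / n!) • (−log τ)^n x` of the evaluation
map `f(P) = P(0)`. -/
noncomputable def invOfEval {F M : Type*} [Field F] [CharZero F] [AddCommGroup M] [Module F M]
    (τ : M ≃ₗ[F] M) : M → PolynomialModule F M := fun x =>
  ∑ᶠ n : ℕ, PolynomialModule.single F n
    ((n.factorial : F)⁻¹ • (fun y => -logOf τ y)^[n] x)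

/-!
For a `τ̃`-fixed `q`, the function `f r = q(r)` satisfies `f (r + 1) = τ⁻¹ (f r)`, so its
`d`-th forward difference is `(τ⁻¹ - 1)^d ∘ f`; for `d ≥ deg q` it is also the constant
`d! • q_d`. At `r = 0` this gives `(τ⁻¹ - 1)^d q(0) = 0` for `d > deg q`, so `q(0) ∈ M^log`,
and, for `d = deg q`, that `q(0) = 0` forces `q = 0`.

Conversely, `τ - 1` is nilpotent on a given `x ∈ M^log`, and `log τ` and the exponentials are
polynomials in it there, so identities in `F[X]` modulo `X^N` suffice. The `k`-th coefficient
of `τ̃ (g x)` is `τ exp(-log τ) (-log τ)^k x / k!`, and `g x` is fixed because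
`(1 + X) exp(-log (1 + X)) ≡ 1 mod X^N`: its derivative vanishes modulo `X^(N-1)`.
-/

open Polynomial Finset fwdDiff

section ForwardDifference

theorem fwdDiff_iter_smul_const {R G M : Type*} [Ring R] [AddCommMonoid G] [AddCommGroup M]
    [Module R M] (h : G) (f : G → R) (m : M) (n : ℕ) :
    (Δ_[h])^[n] (fun y => f y • m) = fun y => (Δ_[h])^[n] f y • m := by
  induction n generalizing f with
  | zero => rfl
  | succ n ih =>
    rw [Function.iterate_succ_apply, fwdDiff_smul_const, Function.iterate_succ_apply, ← ih]
    rfl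

theorem fwdDiff_iter_eq_pow_apply {R G M : Type*} [Semiring R] [AddCommMonoid G]
    [AddCommGroup M] [Module R M] (h : G) {f : G → M} {A : Module.End R M}
    (hf : Δ_[h] f = fun y => A (f y)) (n : ℕ) :
    (Δ_[h])^[n] f = fun y => (A ^ n) (f y) := by
  induction n with
  | zero => rfl
  | succ n ih =>
    rw [Function.iterate_succ_apply', ih]
    funext y
    simp only [fwdDiff, ← map_sub, pow_succ, Module.End.mul_apply]
    exact congrArg (A ^ n) (congrFun hf y)

theorem PolynomialModule.fwdDiff_iter_eval {R M : Type*} [CommRing R] [AddCommGroup M]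
    [Module R M] {q : PolynomialModule R M} {d : ℕ} (hq : ∀ k, d < k → q.coeff k = 0) :
    (Δ_[1])^[d] (fun r => eval r q) = fun _ => (d.factorial : R) • q.coeff d := by
  have hsum : (fun r => eval r q) = ∑ k ∈ range (d + 1), fun r : R => r ^ k • q.coeff k := by
    funext r
    rw [eval_apply, Finsupp.sum_of_support_subset _ (s := range (d + 1))]
    · simp
    · intro k hk
      by_contra hkd
      exact Finsupp.mem_support_iff.mp hk (hq k (by simpa using hkd))
    · simp
  rw [hsum, fwdDiff_iter_finsetSum, sum_range_succ, sum_eq_zero, zero_add]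
  · funext r
    rw [fwdDiff_iter_smul_const, fwdDiff_iter_eq_factorial]
    simp
  · intro k hk
    funext r
    rw [fwdDiff_iter_smul_const, fwdDiff_iter_pow_eq_zero_of_lt (mem_range.mp hk)]
    simp

end ForwardDifference

section Endomorphisms

variable {R M : Type*} [CommRing R] [AddCommGroup M] [Module R M]

theorem LinearEquiv.pow_sub_one_apply_eq_zero_of_symm {τ : M ≃ₗ[R] M} {n : ℕ} {x : M}
    (hx : ((τ.symm.toLinearMap - 1) ^ n) x = 0) : ((τ.toLinearMap - 1) ^ n) x = 0 := by
  have h : τ.toLinearMap - 1 = -(τ.toLinearMap * (τ.symm.toLinearMap - 1)) := by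
    ext y; simp
  have hc : Commute τ.toLinearMap (τ.symm.toLinearMap - 1) := by
    refine Commute.sub_right ?_ (Commute.one_right _)
    ext y; simp
  rw [h, neg_pow, hc.mul_pow, Module.End.mul_apply, Module.End.mul_apply, hx]
  simp

theorem LinearEquiv.apply_aeval_sub_one (τ : M ≃ₗ[R] M) (p : R[X]) (y : M) :
    τ (aeval (τ.toLinearMap - 1) p y) = aeval (τ.toLinearMap - 1) ((1 + X) * p) y := by
  rw [map_mul, Module.End.mul_apply, map_add, map_one, aeval_X, add_sub_cancel]
  rfl

variable {f : Module.End R M} {N : ℕ} {x : M}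

theorem pow_apply_aeval_apply_eq_zero (hx : (f ^ N) x = 0) (p : R[X]) :
    (f ^ N) (aeval f p x) = 0 := by
  have h := ((Commute.all (X ^ N) p).map (aeval f)).eq
  rw [aeval_X_pow] at h
  rw [← Module.End.mul_apply, h, Module.End.mul_apply, hx, map_zero]

theorem aeval_apply_eq_zero_of_X_pow_dvd (hx : (f ^ N) x = 0) {p : R[X]} (hp : X ^ N ∣ p) :
    aeval f p x = 0 := by
  obtain ⟨q, rfl⟩ := hp
  rw [mul_comm, map_mul, Module.End.mul_apply, aeval_X_pow, hx, map_zero]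

theorem aeval_apply_eq_of_X_pow_dvd_sub (hx : (f ^ N) x = 0) {p q : R[X]} (h : X ^ N ∣ p - q) :
    aeval f p x = aeval f q x := by
  rw [← sub_eq_zero, ← LinearMap.sub_apply, ← map_sub, aeval_apply_eq_zero_of_X_pow_dvd hx h]

end Endomorphisms

section FixedPoints

variable {F M : Type*} [Field F] [CharZero F] [AddCommGroup M] [Module F M] {τ : M ≃ₗ[F] M}

variable (τ) in
theorem eval_tauTilde (q : PolynomialModule F M) (r : F) :
    PolynomialModule.eval r (tauTilde τ q) = τ (PolynomialModule.eval (r + 1) q) := by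
  rw [tauTilde, LinearMap.comp_apply, PolynomialModule.comp_eval, PolynomialModule.eval_map']
  simp

theorem fwdDiff_eval_of_tauTilde_eq {q : PolynomialModule F M} (hq : tauTilde τ q = q) :
    Δ_[1] (fun r => PolynomialModule.eval r q) =
      fun r => (τ.symm.toLinearMap - 1) (PolynomialModule.eval r q) := by
  funext r
  have := eval_tauTilde τ q r
  rw [hq] at this
  simp [fwdDiff, this]

theorem factorial_smul_coeff_eq_of_tauTilde_eq {q : PolynomialModule F M}
    (hq : tauTilde τ q = q) {d : ℕ} (hd : ∀ k, d < k → q.coeff k = 0) :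
    (d.factorial : F) • q.coeff d =
      ((τ.symm.toLinearMap - 1) ^ d) (PolynomialModule.eval 0 q) :=
  congrFun ((PolynomialModule.fwdDiff_iter_eval hd).symm.trans
    (fwdDiff_iter_eq_pow_apply 1 (fwdDiff_eval_of_tauTilde_eq hq) d)) 0

theorem eq_zero_of_tauTilde_eq_of_eval_zero {q : PolynomialModule F M} (hq : tauTilde τ q = q)
    (h0 : PolynomialModule.eval 0 q = 0) : q = 0 := by
  by_contra hne
  have hsupp : q.coeff.support.Nonempty := by simpa using hne
  set d := q.coeff.support.max' hsupp
  have hd : ∀ k, d < k → q.coeff k = 0 := fun k hk =>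
    Finsupp.notMem_support_iff.mp fun hmem => (q.coeff.support.le_max' k hmem).not_gt hk
  have := factorial_smul_coeff_eq_of_tauTilde_eq hq hd
  rw [h0, map_zero, smul_eq_zero] at this
  exact (Finsupp.mem_support_iff.mp (q.coeff.support.max'_mem hsupp))
    (this.resolve_left (Nat.cast_ne_zero.mpr d.factorial_ne_zero))

theorem exists_pow_apply_eval_zero_of_tauTilde_eq {q : PolynomialModule F M}
    (hq : tauTilde τ q = q) :
    ∃ n : ℕ, ((τ.toLinearMap - 1) ^ n) (PolynomialModule.eval 0 q) = 0 := by
  obtain ⟨d, hd⟩ := q.coeff.support.exists_nat_subset_range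
  have hvanish : ∀ k, d ≤ k → q.coeff k = 0 := fun k hk =>
    Finsupp.notMem_support_iff.mp fun hmem => (mem_range.mp (hd hmem)).not_ge hk
  have := factorial_smul_coeff_eq_of_tauTilde_eq hq fun k hk => hvanish k hk.le
  rw [hvanish d le_rfl, smul_zero] at this
  exact ⟨d, LinearEquiv.pow_sub_one_apply_eq_zero_of_symm this.symm⟩

end FixedPoints

section TruncatedExpLog

variable (F : Type*) [Field F]

noncomputable def logPoly (N : ℕ) : F[X] :=
  ∑ k ∈ range N, C ((-1 : F) ^ k / (k + 1 : F)) * X ^ (k + 1)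

noncomputable def expPoly (N : ℕ) (p : F[X]) : F[X] :=
  ∑ n ∈ range N, C ((n.factorial : F)⁻¹) * p ^ n

variable {F}

theorem X_dvd_logPoly (N : ℕ) : X ∣ logPoly F N :=
  dvd_sum fun k _ => (dvd_pow_self X k.succ_ne_zero).mul_left _

variable [CharZero F]

theorem one_add_X_mul_derivative_logPoly (N : ℕ) :
    (1 + X) * derivative (logPoly F N) = 1 - (-X) ^ N := by
  have hderiv : derivative (logPoly F N) = ∑ k ∈ range N, (-X : F[X]) ^ k := by
    refine (derivative_sum ..).trans (sum_congr rfl fun k _ => ?_)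
    rw [derivative_C_mul_X_pow, Nat.add_sub_cancel, Nat.cast_succ,
      div_mul_cancel₀ _ (Nat.cast_add_one_ne_zero k), map_pow, map_neg, map_one,
      neg_pow (X : F[X])]
  rw [hderiv]
  linear_combination -(geom_sum_mul (-X : F[X]) N)

theorem derivative_expPoly_succ (N : ℕ) (p : F[X]) :
    derivative (expPoly F (N + 1) p) = derivative p * expPoly F N p := by
  rw [expPoly, sum_range_succ', derivative_add, derivative_sum, expPoly, mul_sum]
  simp only [pow_zero, mul_one, derivative_C, add_zero, derivative_C_mul, derivative_pow]
  refine sum_congr rfl fun n _ => ?_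
  have h : ((n + 1).factorial : F)⁻¹ * ((n + 1 : ℕ) : F) = (n.factorial : F)⁻¹ := by
    rw [Nat.factorial_succ, Nat.cast_mul]
    field_simp
  rw [Nat.add_sub_cancel, ← mul_assoc, ← mul_assoc, ← C_mul, h]
  ring

theorem X_pow_succ_dvd_of_X_pow_dvd_derivative {p : F[X]} {n : ℕ} (h0 : p.coeff 0 = 0)
    (h : X ^ n ∣ derivative p) : X ^ (n + 1) ∣ p := by
  rw [X_pow_dvd_iff] at h ⊢
  intro d hd
  cases d with
  | zero => exact h0
  | succ d =>
    have := h d (by omega)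
    rw [coeff_derivative, mul_eq_zero] at this
    exact this.resolve_right (by exact_mod_cast d.succ_ne_zero)

theorem X_pow_dvd_one_add_X_mul_expPoly_neg_logPoly_sub_one (N : ℕ) :
    X ^ N ∣ (1 + X) * expPoly F N (-logPoly F N) - 1 := by
  cases N with
  | zero => simp
  | succ m =>
    set ℓ := logPoly F (m + 1)
    have hderiv : derivative ((1 + X) * expPoly F (m + 1) (-ℓ) - 1) =
        C ((m.factorial : F)⁻¹) * (-ℓ) ^ m + (-X) ^ (m + 1) * expPoly F m (-ℓ) := by
      rw [derivative_sub, derivative_one, sub_zero, derivative_mul, derivative_expPoly_succ,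
        derivative_add, derivative_one, derivative_X, derivative_neg]
      rw [expPoly, sum_range_succ, ← expPoly]
      linear_combination (-expPoly F m (-ℓ)) * one_add_X_mul_derivative_logPoly (F := F) (m + 1)
    have hℓ : ℓ.eval 0 = 0 := by
      rw [← coeff_zero_eq_eval_zero, ← X_dvd_iff]
      exact X_dvd_logPoly _
    refine X_pow_succ_dvd_of_X_pow_dvd_derivative ?_ ?_
    · simp [coeff_zero_eq_eval_zero, expPoly, eval_finsetSum, hℓ, sum_range_succ']
    · rw [hderiv]
      refine dvd_add ((pow_dvd_pow_of_dvd (X_dvd_logPoly _).neg_right m).mul_left _) ?_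
      exact ((pow_dvd_pow X m.le_succ).trans (by rw [neg_pow]; exact dvd_mul_left _ _)).mul_right _

theorem sum_choose_smul_expPoly_term (k N : ℕ) (p : F[X]) :
    ∑ n ∈ range (k + N), (n.choose k : F) • (C ((n.factorial : F)⁻¹) * p ^ n) =
      C ((k.factorial : F)⁻¹) * p ^ k * expPoly F N p := by
  rw [sum_range_add, sum_eq_zero fun n hn => by rw [Nat.choose_eq_zero_of_lt (mem_range.mp hn),
    Nat.cast_zero, zero_smul], zero_add, expPoly, mul_sum]
  refine sum_congr rfl fun i _ => ?_
  have h : ((k + i).choose k : F) * ((k + i).factorial : F)⁻¹ =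
      (k.factorial : F)⁻¹ * (i.factorial : F)⁻¹ := by
    have : ((k + i).factorial : F) ≠ 0 := Nat.cast_ne_zero.mpr (Nat.factorial_ne_zero _)
    rw [Nat.cast_add_choose]
    field_simp
  rw [smul_eq_C_mul, ← mul_assoc, ← C_mul, h, C_mul, pow_add]
  ring

end TruncatedExpLog

section InverseOfEval

variable {F M : Type*} [Field F] [CharZero F] [AddCommGroup M] [Module F M] {τ : M ≃ₗ[F] M}
  {N : ℕ} {x : M}

theorem logOf_eq_aeval_logPoly (hx : ((τ.toLinearMap - 1) ^ N) x = 0) :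
    logOf τ x = aeval (τ.toLinearMap - 1) (logPoly F N) x := by
  have hsupp : (Function.support fun k : ℕ =>
      ((-1 : F) ^ k / (k + 1 : F)) • ((τ.toLinearMap - 1) ^ (k + 1)) x) ⊆ range N := by
    refine Function.support_subset_iff'.mpr fun k hk => ?_
    rw [coe_range, Set.mem_Iio, not_lt] at hk
    rw [Module.End.pow_map_zero_of_le (by omega) hx, smul_zero]
  rw [logOf, finsum_eq_sum_of_support_subset _ hsupp]
  simp [logPoly, LinearMap.sum_apply]

theorem iterate_neg_logOf (hx : ((τ.toLinearMap - 1) ^ N) x = 0) (n : ℕ) :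
    (fun y => -logOf τ y)^[n] x = aeval (τ.toLinearMap - 1) ((-logPoly F N) ^ n) x := by
  induction n with
  | zero => simp
  | succ n ih =>
    rw [Function.iterate_succ_apply', ih,
      logOf_eq_aeval_logPoly (pow_apply_aeval_apply_eq_zero hx _), pow_succ', map_mul, map_neg]
    rfl

theorem factorial_inv_smul_iterate_neg_logOf (hx : ((τ.toLinearMap - 1) ^ N) x = 0) (n : ℕ) :
    (n.factorial : F)⁻¹ • (fun y => -logOf τ y)^[n] x =
      aeval (τ.toLinearMap - 1) (C (n.factorial : F)⁻¹ * (-logPoly F N) ^ n) x := by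
  rw [iterate_neg_logOf hx, map_mul, aeval_C, Module.End.mul_apply, Module.algebraMap_end_apply]

theorem support_invOfEval_subset (hx : ((τ.toLinearMap - 1) ^ N) x = 0) :
    (Function.support fun n : ℕ => PolynomialModule.single F n
      ((n.factorial : F)⁻¹ • (fun y => -logOf τ y)^[n] x)) ⊆ range N := by
  refine Function.support_subset_iff'.mpr fun n hn => ?_
  rw [coe_range, Set.mem_Iio, not_lt] at hn
  rw [factorial_inv_smul_iterate_neg_logOf hx, aeval_apply_eq_zero_of_X_pow_dvd hx,
    PolynomialModule.single_zero]
  exact ((pow_dvd_pow X hn).trans (pow_dvd_pow_of_dvd (X_dvd_logPoly N).neg_right n)).mul_left _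

theorem invOfEval_eq_sum (hx : ((τ.toLinearMap - 1) ^ N) x = 0) {K : ℕ} (hK : N ≤ K) :
    invOfEval τ x = ∑ n ∈ range K, PolynomialModule.single F n
      (aeval (τ.toLinearMap - 1) (C (n.factorial : F)⁻¹ * (-logPoly F N) ^ n) x) := by
  rw [invOfEval, finsum_eq_sum_of_support_subset _
    ((support_invOfEval_subset hx).trans (coe_subset.mpr (range_subset_range.mpr hK)))]
  simp_rw [factorial_inv_smul_iterate_neg_logOf hx]

variable (τ) in
theorem coeff_tauTilde_single (n : ℕ) (m : M) (k : ℕ) :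
    (tauTilde τ (PolynomialModule.single F n m)).coeff k = (n.choose k : F) • τ m := by
  rw [tauTilde, LinearMap.comp_apply, PolynomialModule.map_single, PolynomialModule.comp_single,
    PolynomialModule.smul_single_apply, if_pos k.zero_le, Nat.sub_zero, coeff_X_add_one_pow]
  rfl

theorem tauTilde_invOfEval (hx : ∃ n : ℕ, ((τ.toLinearMap - 1) ^ n) x = 0) :
    tauTilde τ (invOfEval τ x) = invOfEval τ x := by
  obtain ⟨N, hN⟩ := hx
  have hx : ((τ.toLinearMap - 1) ^ (N + 1)) x = 0 := Module.End.pow_map_zero_of_le N.le_succ hN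
  set ℓ := logPoly F (N + 1)
  ext k
  -- truncating at `k + (N + 1)` turns the `k`-th coefficient into a full `expPoly (N + 1)`
  rw [invOfEval_eq_sum hx (K := k + (N + 1)) le_add_self, map_sum, PolynomialModule.coeff_sum,
    PolynomialModule.coeff_sum, Finsupp.finsetSum_apply, Finsupp.finsetSum_apply]
  simp only [coeff_tauTilde_single, PolynomialModule.coeff_single, Finsupp.single_apply,
    sum_ite_eq', mem_range, show k < k + (N + 1) by omega, if_true]
  calc ∑ n ∈ range (k + (N + 1)), (n.choose k : F) •
        τ (aeval (τ.toLinearMap - 1) (C (n.factorial : F)⁻¹ * (-ℓ) ^ n) x)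
      = τ (aeval (τ.toLinearMap - 1) (∑ n ∈ range (k + (N + 1)),
          (n.choose k : F) • (C (n.factorial : F)⁻¹ * (-ℓ) ^ n)) x) := by
        simp only [map_sum, map_smul, LinearMap.sum_apply, LinearMap.smul_apply]
    _ = aeval (τ.toLinearMap - 1)
          ((1 + X) * (C (k.factorial : F)⁻¹ * (-ℓ) ^ k * expPoly F (N + 1) (-ℓ))) x := by
        rw [sum_choose_smul_expPoly_term, LinearEquiv.apply_aeval_sub_one]
    _ = aeval (τ.toLinearMap - 1) (C (k.factorial : F)⁻¹ * (-ℓ) ^ k) x := by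
        refine aeval_apply_eq_of_X_pow_dvd_sub hx ?_
        have := (X_pow_dvd_one_add_X_mul_expPoly_neg_logPoly_sub_one (F := F) (N + 1)).mul_left
          (C (k.factorial : F)⁻¹ * (-ℓ) ^ k)
        convert this using 1
        ring

theorem eval_zero_invOfEval (hx : ∃ n : ℕ, ((τ.toLinearMap - 1) ^ n) x = 0) :
    PolynomialModule.eval 0 (invOfEval τ x) = x := by
  obtain ⟨N, hN⟩ := hx
  rw [invOfEval_eq_sum hN N.le_succ, map_sum, sum_range_succ']
  simp

end InverseOfEval

/-- Let `M` be a vector space over a field of characteristic `0` and `τ`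
a linear automorphism of `M`.  The evaluation map `f : M[e]^{τ̃ = 1} → M`, `f(P) = P(0)`,
is injective and its image is exactly `M^log = {x : (τ−1)^n x = 0 for some n}`; moreover
its inverse `g : M^log → M[e]^{τ̃ = 1}` is given by
`g(x) = Σ_{n ≥ 0} (e^n / n!) • (−log τ)^n x`, a finite sum for each `x ∈ M^log`. -/
theorem eval_injOn_image_eq_locallyUnipotent
    {F M : Type*} [Field F] [CharZero F] [AddCommGroup M] [Module F M]
    (τ : M ≃ₗ[F] M) :
    Set.InjOn (PolynomialModule.eval (0 : F)) {q | tauTilde τ q = q} ∧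
    PolynomialModule.eval (0 : F) '' {q | tauTilde τ q = q} =
      {x : M | ∃ n : ℕ, ((τ.toLinearMap - 1) ^ n) x = 0} ∧
    (∀ x : M, (∃ n : ℕ, ((τ.toLinearMap - 1) ^ n) x = 0) →
      (Function.support fun n : ℕ => PolynomialModule.single F n
          ((n.factorial : F)⁻¹ • (fun y => -logOf τ y)^[n] x)).Finite ∧
      tauTilde τ (invOfEval τ x) = invOfEval τ x ∧
      PolynomialModule.eval (0 : F) (invOfEval τ x) = x) ∧
    (∀ q : PolynomialModule F M, tauTilde τ q = q →
      invOfEval τ (PolynomialModule.eval (0 : F) q) = q) := by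
  have hinj : Set.InjOn (PolynomialModule.eval (0 : F)) {q | tauTilde τ q = q} :=
    fun q₁ (h₁ : tauTilde τ q₁ = q₁) q₂ (h₂ : tauTilde τ q₂ = q₂) h =>
      sub_eq_zero.mp (eq_zero_of_tauTilde_eq_of_eval_zero (by rw [map_sub, h₁, h₂])
        (by rw [map_sub, h, sub_self]))
  refine ⟨hinj, ?_, fun x hx => ⟨?_, tauTilde_invOfEval hx, eval_zero_invOfEval hx⟩,
    fun q hq => ?_⟩
  · refine Set.Subset.antisymm ?_ fun x hx => ⟨invOfEval τ x, tauTilde_invOfEval hx,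
      eval_zero_invOfEval hx⟩
    rintro _ ⟨q, hq, rfl⟩
    exact exists_pow_apply_eval_zero_of_tauTilde_eq hq
  · obtain ⟨N, hN⟩ := hx
    exact (finite_toSet _).subset (support_invOfEval_subset hN)
  · have hx := exists_pow_apply_eval_zero_of_tauTilde_eq hq
    exact hinj (tauTilde_invOfEval hx) hq (eval_zero_invOfEval hx)
end

section
/- Suppose there exists an invertible d×d matrix H over R with H·γ(Δ)·H^{−1} = c·Δ. Then the coefficients of the characteristic polynomial of Δ satisfy γ(a_i) = c^{d−i}·a_i for all 0 ≤ i ≤ d−1. If moreover, for every 1 ≤ j ≤ d, the only element r ∈ R satisfying γ(r) = c^j·r is r = 0, then a_i = 0 for all 0 ≤ i ≤ d−1 and consequently Δ^d = 0, i.e. Δ is nilpotent. -/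
/-!
Applying `γ` entrywise applies `γ` to the coefficients of the characteristic polynomial, and
conjugating by `H` does not change it, so `γ(a_i)` is the `i`-th coefficient of the characteristic
polynomial of `c • Δ`, which is `c^(d-i) a_i`. The scaling rule is cleanest on the reversed
polynomial `det (1 - X • Δ)`, where replacing `Δ` by `c • Δ` is the substitution `X ↦ c X`; unlike
`det (X - c • Δ)`, this needs no cancellation of powers of `c`. If no nonzero `r` satisfies
`γ r = c^j r`, all non-leading coefficients vanish, the characteristic polynomial is `X^d`, and
Cayley–Hamilton gives `Δ^d = 0`.
-/

open Polynomial

namespace Matrix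

variable {n R : Type*} [Fintype n] [DecidableEq n] [CommRing R]

theorem charpolyRev_smul (c : R) (M : Matrix n n R) :
    (c • M).charpolyRev = M.charpolyRev.comp (C c * X) := by
  rw [charpolyRev, charpolyRev, ← coe_compRingHom_apply, RingHom.map_det]
  congr 1
  ext i j : 1
  by_cases h : i = j <;> simp [h] <;> ring

theorem coeff_charpoly_eq_coeff_charpolyRev [Nontrivial R] (M : Matrix n n R) {i : ℕ}
    (hi : i ≤ Fintype.card n) : M.charpoly.coeff i = M.charpolyRev.coeff (Fintype.card n - i) := by
  rw [← reverse_charpoly, coeff_reverse, charpoly_natDegree_eq_dim, revAt_le (Nat.sub_le _ _),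
    Nat.sub_sub_self hi]

theorem coeff_charpoly_smul (c : R) (M : Matrix n n R) {i : ℕ} (hi : i ≤ Fintype.card n) :
    (c • M).charpoly.coeff i = c ^ (Fintype.card n - i) * M.charpoly.coeff i := by
  nontriviality R
  rw [coeff_charpoly_eq_coeff_charpolyRev _ hi, coeff_charpoly_eq_coeff_charpolyRev _ hi,
    charpolyRev_smul, comp_C_mul_X_coeff, mul_comm]

theorem charpoly_eq_X_pow_of_coeff_eq_zero [Nontrivial R] {M : Matrix n n R}
    (h : ∀ i < Fintype.card n, M.charpoly.coeff i = 0) : M.charpoly = X ^ Fintype.card n := by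
  rw [← M.charpoly_natDegree_eq_dim, M.charpoly_monic.eq_X_pow_iff_natDegree_le_natTrailingDegree]
  refine le_natTrailingDegree M.charpoly_monic.ne_zero fun m hm => h m ?_
  rwa [charpoly_natDegree_eq_dim] at hm

theorem pow_card_eq_zero_of_coeff_charpoly_eq_zero {M : Matrix n n R}
    (h : ∀ i < Fintype.card n, M.charpoly.coeff i = 0) : M ^ Fintype.card n = 0 := by
  nontriviality R
  simpa [charpoly_eq_X_pow_of_coeff_eq_zero h] using M.aeval_self_charpoly

end Matrix

theorem charpoly_coeff_semiinvariant_and_nilpotent_general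
    {R : Type*} [CommRing R] (γ : R ≃+* R) (c : R)
    {d : ℕ} (Δ : Matrix (Fin d) (Fin d) R)
    (H : (Matrix (Fin d) (Fin d) R)ˣ)
    (hH : (H : Matrix (Fin d) (Fin d) R) * Δ.map γ * ((H⁻¹ : (Matrix (Fin d) (Fin d) R)ˣ) :
      Matrix (Fin d) (Fin d) R) = c • Δ) :
    (∀ i < d, γ (Δ.charpoly.coeff i) = c ^ (d - i) * Δ.charpoly.coeff i) ∧
    ((∀ j, 1 ≤ j → j ≤ d → ∀ r : R, γ r = c ^ j * r → r = 0) →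
      (∀ i < d, Δ.charpoly.coeff i = 0) ∧ Δ ^ d = 0) := by
  have hcharpoly : Δ.charpoly.map (γ : R →+* R) = (c • Δ).charpoly := by
    rw [← Matrix.charpoly_map, ← hH, Matrix.coe_units_inv, Matrix.charpoly_units_conj]
    rfl
  have semiinvariant : ∀ i < d, γ (Δ.charpoly.coeff i) = c ^ (d - i) * Δ.charpoly.coeff i :=
    fun i hi => by
      simpa [Matrix.coeff_charpoly_smul c Δ (i := i) (by simpa using hi.le)] using
        congrArg (coeff · i) hcharpoly
  refine ⟨semiinvariant, fun hrigid => ?_⟩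
  have hcoeff : ∀ i < d, Δ.charpoly.coeff i = 0 := fun i hi =>
    hrigid (d - i) (by omega) (by omega) _ (semiinvariant i hi)
  refine ⟨hcoeff, ?_⟩
  simpa using Δ.pow_card_eq_zero_of_coeff_charpoly_eq_zero (by simpa using hcoeff)

/-- Let `R` be a commutative ring, `γ` a ring automorphism of `R`, and
`c ∈ R` fixed by `γ`.  Let `Δ` be a `d × d` matrix over `R` and suppose there is an
invertible `d × d` matrix `H` over `R` with `H · γ(Δ) · H⁻¹ = c • Δ` (where `γ(Δ)` is
obtained by applying `γ` entrywise).  Writing the characteristic polynomial of `Δ` as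
`λ^d + a_{d−1} λ^{d−1} + ⋯ + a_0`, the coefficients satisfy `γ(a_i) = c^{d−i} · a_i` for
all `0 ≤ i ≤ d − 1`.  If moreover, for every `1 ≤ j ≤ d`, the only `r ∈ R` with
`γ(r) = c^j · r` is `r = 0`, then `a_i = 0` for all `0 ≤ i ≤ d − 1` and consequently
`Δ^d = 0`, i.e. `Δ` is nilpotent. -/
theorem charpoly_coeff_semiinvariant_and_nilpotent
    {R : Type*} [CommRing R] (γ : R ≃+* R) (c : R) (hc : γ c = c)
    {d : ℕ} (Δ : Matrix (Fin d) (Fin d) R)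
    (H : (Matrix (Fin d) (Fin d) R)ˣ)
    (hH : (H : Matrix (Fin d) (Fin d) R) * Δ.map γ * ((H⁻¹ : (Matrix (Fin d) (Fin d) R)ˣ) :
      Matrix (Fin d) (Fin d) R) = c • Δ) :
    (∀ i < d, γ (Δ.charpoly.coeff i) = c ^ (d - i) * Δ.charpoly.coeff i) ∧
    ((∀ j, 1 ≤ j → j ≤ d → ∀ r : R, γ r = c ^ j * r → r = 0) →
      (∀ i < d, Δ.charpoly.coeff i = 0) ∧ Δ ^ d = 0) :=
  charpoly_coeff_semiinvariant_and_nilpotent_general γ c Δ H hH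
end
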